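/- Consider the two-player game Ψ with action sets {a1,a2} for player 1 and {b1,b2} for player 2, and payoffs (u_1,u_2): (a1,b1)↦(2,2), (a1,b2)↦(2,1), (a2,b1)↦(2,3), (a2,b2)↦(0,0). Then: (i) the set of Nash equilibria of Ψ is exactly the set of profiles σ with σ_2(b1)=1; and (ii) the set of empirical equilibria of Ψ is exactly the set of profiles σ with σ_2(b1)=1 and σ_1(a1) ≥ 1/2. -/

import Mathlib

open Filter Topology

section GameDefs

variable {N : Type} [Fintype N] [DecidableEq N] {A : N → Type}
  [∀ i, Fintype (A i)] [∀ i, DecidableEq (A i)]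

/-- A mixed-strategy profile: each `σ i` is a probability distribution on `A i`. -/
def IsStrategy (σ : ∀ i, A i → ℝ) : Prop :=
  (∀ i a, 0 ≤ σ i a) ∧ ∀ i, ∑ a, σ i a = 1

/-- An interior profile places positive probability on every action. -/
def Interior (σ : ∀ i, A i → ℝ) : Prop :=
  ∀ i a, 0 < σ i a

/-- Expected utility of player `i` at profile `σ`. -/
noncomputable def expUtil (u : ∀ i : N, (∀ j, A j) → ℝ) (σ : ∀ i, A i → ℝ) (i : N) : ℝ :=
  ∑ a : ∀ j, A j, u i a * ∏ j, σ j (a j)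

/-- Expected utility of player `i` from playing action `ai` against `σ₋ᵢ`. -/
noncomputable def devUtil (u : ∀ i : N, (∀ j, A j) → ℝ) (σ : ∀ i, A i → ℝ)
    (i : N) (ai : A i) : ℝ :=
  expUtil u (Function.update σ i (fun b => if b = ai then (1 : ℝ) else 0)) i

/-- Nash equilibrium. -/
def IsNash (u : ∀ i : N, (∀ j, A j) → ℝ) (σ : ∀ i, A i → ℝ) : Prop :=
  IsStrategy σ ∧ ∀ (i : N) (μ : A i → ℝ), (∀ a, 0 ≤ μ a) → (∑ a, μ a = 1) →
    expUtil u (Function.update σ i μ) i ≤ expUtil u σ i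

/-- Weak payoff monotonicity: differences in behavior reveal differences in payoffs. -/
def WeaklyPayoffMonotone (u : ∀ i : N, (∀ j, A j) → ℝ) (σ : ∀ i, A i → ℝ) : Prop :=
  IsStrategy σ ∧ ∀ (i : N) (ai bi : A i), σ i bi < σ i ai →
    devUtil u σ i bi < devUtil u σ i ai

/-- Payoff monotonicity. -/
def PayoffMonotone (u : ∀ i : N, (∀ j, A j) → ℝ) (σ : ∀ i, A i → ℝ) : Prop :=
  IsStrategy σ ∧ ∀ (i : N) (ai bi : A i),
    σ i bi ≤ σ i ai ↔ devUtil u σ i bi ≤ devUtil u σ i ai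

/-- Pointwise convergence of a sequence of profiles. -/
def ConvergesTo (s : ℕ → ∀ i, A i → ℝ) (σ : ∀ i, A i → ℝ) : Prop :=
  ∀ (i : N) (ai : A i), Tendsto (fun n => s n i ai) atTop (𝓝 (σ i ai))

/-- Empirical equilibrium: a Nash equilibrium that is the limit of weakly payoff
monotone profiles. -/
def IsEmpirical (u : ∀ i : N, (∀ j, A j) → ℝ) (σ : ∀ i, A i → ℝ) : Prop :=
  IsNash u σ ∧ ∃ s : ℕ → ∀ i, A i → ℝ,
    (∀ n, WeaklyPayoffMonotone u (s n)) ∧ ConvergesTo s σ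

/-- Proper equilibrium (Myerson). -/
def IsProper (u : ∀ i : N, (∀ j, A j) → ℝ) (σ : ∀ i, A i → ℝ) : Prop :=
  IsStrategy σ ∧ ∃ s : ℕ → ∀ i, A i → ℝ,
    (∀ n, IsStrategy (s n) ∧ Interior (s n) ∧
      ∀ (i : N) (ai bi : A i),
        devUtil u (s n) i bi < devUtil u (s n) i ai →
          s n i bi ≤ (1 / (n + 1) : ℝ) * s n i ai) ∧
    ConvergesTo s σ

/-- Perfect equilibrium (Selten, in Myerson's formulation). -/
def IsPerfect (u : ∀ i : N, (∀ j, A j) → ℝ) (σ : ∀ i, A i → ℝ) : Prop :=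
  IsStrategy σ ∧ ∃ s : ℕ → ∀ i, A i → ℝ,
    (∀ n, IsStrategy (s n) ∧ Interior (s n) ∧
      ∀ (i : N) (ai : A i), (1 / (n + 1) : ℝ) < s n i ai →
        ∀ bi : A i, devUtil u (s n) i bi ≤ devUtil u (s n) i ai) ∧
    ConvergesTo s σ

/-- `bi` weakly dominates `ai` for player `i`. -/
def WeaklyDominates (u : ∀ i : N, (∀ j, A j) → ℝ) (i : N) (bi ai : A i) : Prop :=
  (∀ a : ∀ j, A j, u i (Function.update a i ai) ≤ u i (Function.update a i bi)) ∧
  ∃ a : ∀ j, A j, u i (Function.update a i ai) < u i (Function.update a i bi)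

/-- Undominated Nash equilibrium. -/
def IsUndominatedNash (u : ∀ i : N, (∀ j, A j) → ℝ) (σ : ∀ i, A i → ℝ) : Prop :=
  IsNash u σ ∧ ∀ (i : N) (ai : A i), 0 < σ i ai →
    ¬ ∃ bi : A i, WeaklyDominates u i bi ai

end GameDefs

/-- A regular quantal response function on a finite set of actions `B`:
interiority, continuity, responsiveness, and monotonicity. -/
def IsRegularQRF {B : Type} [Fintype B] [DecidableEq B]
    (p : (B → ℝ) → (B → ℝ)) : Prop :=
  (∀ x, (∀ a, 0 < p x a) ∧ ∑ a, p x a = 1) ∧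
  Continuous p ∧
  (∀ (x : B → ℝ) (η : ℝ) (a : B), 0 < η →
    p x a < p (Function.update x a (x a + η)) a) ∧
  ∀ (x : B → ℝ) (a b : B), x b < x a → p x b < p x a

section QREDefs

variable {N : Type} [Fintype N] [DecidableEq N] {A : N → Type}
  [∀ i, Fintype (A i)] [∀ i, DecidableEq (A i)]

/-- Quantal response equilibrium with respect to a profile of QRFs `p`. -/
def IsQRE (u : ∀ i : N, (∀ j, A j) → ℝ) (p : ∀ i, (A i → ℝ) → (A i → ℝ))
    (σ : ∀ i, A i → ℝ) : Prop :=
  ∀ i : N, σ i = p i (fun ai => devUtil u σ i ai)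

/-- A sequence of profiles of QRFs is utility maximizing in the limit. -/
def UtilityMaximizingInLimit (u : ∀ i : N, (∀ j, A j) → ℝ)
    (p : ℕ → ∀ i, (A i → ℝ) → (A i → ℝ)) : Prop :=
  ∀ (s : ℕ → ∀ i, A i → ℝ) (σ : ∀ i, A i → ℝ),
    (∀ n, IsQRE u (p n) (s n)) → ConvergesTo s σ → IsNash u σ

/-- `σ` is approachable by regular QRE that are utility maximizing in the limit. -/
def ApproachableByRegularQRE (u : ∀ i : N, (∀ j, A j) → ℝ) (σ : ∀ i, A i → ℝ) : Prop :=
  ∃ p : ℕ → ∀ i, (A i → ℝ) → (A i → ℝ),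
    (∀ n i, IsRegularQRF (p n i)) ∧ UtilityMaximizingInLimit u p ∧
    ∃ s : ℕ → ∀ i, A i → ℝ, (∀ n, IsQRE u (p n) (s n)) ∧ ConvergesTo s σ

end QREDefs

/-- A control cost function (van Damme), bundled with its derivative on `(0,1]`. -/
structure ControlCost where
  f : ℝ → ℝ
  f' : ℝ → ℝ
  hasDeriv : ∀ x ∈ Set.Ioc (0:ℝ) 1, HasDerivWithinAt f (f' x) (Set.Ioc (0:ℝ) 1) x
  contDeriv : ContinuousOn f' (Set.Ioc (0:ℝ) 1)
  anti : StrictAntiOn f (Set.Ioc (0:ℝ) 1)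
  convex : StrictConvexOn ℝ (Set.Ioc (0:ℝ) 1) f
  atOne : f 1 = 0
  blowup : Tendsto f (nhdsWithin 0 (Set.Ioi (0:ℝ))) atTop

/-- The game Ψ. Player `0` is player 1 (actions `0 = a1`, `1 = a2`); player `1` is
player 2 (actions `0 = b1`, `1 = b2`). Payoffs: (a1,b1)↦(2,2), (a1,b2)↦(2,1),
(a2,b1)↦(2,3), (a2,b2)↦(0,0). -/
noncomputable def uPsi : ∀ _ : Fin 2, (Fin 2 → Fin 2) → ℝ := fun i a =>
  if i = 0 then ![![(2:ℝ), 2], ![2, 0]] (a 0) (a 1)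
  else ![![(2:ℝ), 1], ![3, 0]] (a 0) (a 1)

/-! In Ψ, action b1 strictly dominates b2 for player 2 (it earns `2σ₁(a1) + 3σ₁(a2)` against
`σ₁(a1)`), so player 2 plays b1 in every Nash equilibrium, and against b1 player 1 is indifferent.
Action a1 weakly dominates a2 for player 1 (it earns `2` against `2σ₂(b1)`), so every weakly payoff
monotone profile has `σ₁(a2) ≤ σ₁(a1)`, and this inequality passes to limits. Conversely, if
`σ₁(a1) ≥ 1/2`, keep `σ₁` and let player 2 tremble to b2 with probability `ε → 0`: then a1 is
strictly better than a2 and b1 strictly better than b2, so these profiles are weakly payoff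
monotone. -/

open Finset

theorem prod_update_apply {N : Type} [Fintype N] [DecidableEq N] {A : N → Type} {M : Type*}
    [CommMonoid M] (σ : ∀ i, A i → M) (i : N) (μ : A i → M) (a : ∀ j, A j) :
    ∏ j, Function.update σ i μ j (a j) = μ (a i) * ∏ j ∈ univ.erase i, σ j (a j) := by
  rw [← mul_prod_erase _ _ (mem_univ i), Function.update_self]
  congr 1
  refine prod_congr rfl fun j hj => ?_
  rw [Function.update_of_ne (ne_of_mem_erase hj)]

section FiniteGame

variable {N : Type} [Fintype N] [DecidableEq N] {A : N → Type}
  [∀ i, Fintype (A i)] [∀ i, DecidableEq (A i)]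

theorem expUtil_update_eq_sum_devUtil (u : ∀ i : N, (∀ j, A j) → ℝ) (σ : ∀ i, A i → ℝ)
    (i : N) (μ : A i → ℝ) :
    expUtil u (Function.update σ i μ) i = ∑ b, μ b * devUtil u σ i b := by
  simp only [devUtil, expUtil, prod_update_apply, mul_sum, ite_mul, one_mul, zero_mul, mul_ite,
    mul_zero]
  rw [sum_comm]
  refine sum_congr rfl fun a _ => ?_
  rw [sum_ite_eq, if_pos (mem_univ _)]
  ring

theorem expUtil_eq_sum_devUtil (u : ∀ i : N, (∀ j, A j) → ℝ) (σ : ∀ i, A i → ℝ) (i : N) :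
    expUtil u σ i = ∑ b, σ i b * devUtil u σ i b := by
  simpa using expUtil_update_eq_sum_devUtil u σ i (σ i)

theorem isNash_iff_devUtil_le (u : ∀ i : N, (∀ j, A j) → ℝ) (σ : ∀ i, A i → ℝ) :
    IsNash u σ ↔ IsStrategy σ ∧ ∀ i a, devUtil u σ i a ≤ expUtil u σ i := by
  refine ⟨fun ⟨hσ, h⟩ => ⟨hσ, fun i a => h i _ (fun b => by positivity) (by simp)⟩,
    fun ⟨hσ, h⟩ => ⟨hσ, fun i μ hμ hμ1 => ?_⟩⟩
  calc expUtil u (Function.update σ i μ) i = ∑ b, μ b * devUtil u σ i b :=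
        expUtil_update_eq_sum_devUtil u σ i μ
    _ ≤ ∑ b, μ b * expUtil u σ i :=
        sum_le_sum fun b _ => mul_le_mul_of_nonneg_left (h i b) (hμ b)
    _ = expUtil u σ i := by rw [← sum_mul, hμ1, one_mul]

theorem IsNash.apply_eq_zero_of_devUtil_lt {u : ∀ i : N, (∀ j, A j) → ℝ} {σ : ∀ i, A i → ℝ}
    (h : IsNash u σ) {i : N} {a b : A i} (hlt : devUtil u σ i b < devUtil u σ i a) :
    σ i b = 0 := by
  obtain ⟨hσ, hdev⟩ := (isNash_iff_devUtil_le u σ).1 h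
  -- the slacks `σ i c * (expUtil - devUtil c)` are nonnegative and sum to zero
  have hsum : ∑ c, σ i c * (expUtil u σ i - devUtil u σ i c) = 0 := by
    simp only [mul_sub, sum_sub_distrib, ← sum_mul, hσ.2 i, one_mul,
      ← expUtil_eq_sum_devUtil, sub_self]
  have hb := (sum_eq_zero_iff_of_nonneg fun c _ =>
    mul_nonneg (hσ.1 i c) (sub_nonneg.2 (hdev i c))).1 hsum b (mem_univ b)
  have : 0 < expUtil u σ i - devUtil u σ i b := by linarith [hdev i a]
  exact (mul_eq_zero.1 hb).resolve_right this.ne'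

theorem WeaklyPayoffMonotone.le_of_devUtil_le {u : ∀ i : N, (∀ j, A j) → ℝ}
    {σ : ∀ i, A i → ℝ} (h : WeaklyPayoffMonotone u σ) {i : N} {a b : A i}
    (hd : devUtil u σ i b ≤ devUtil u σ i a) : σ i b ≤ σ i a :=
  not_lt.1 fun hlt => (h.2 i b a hlt).not_ge hd

end FiniteGame

theorem IsStrategy.apply_zero_add_apply_one {N : Type} [Fintype N] [DecidableEq N]
    {σ : N → Fin 2 → ℝ} (hσ : IsStrategy σ) (i : N) : σ i 0 + σ i 1 = 1 := by
  simpa [Fin.sum_univ_two] using hσ.2 i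

section TwoPlayer

variable {α : Type} [Fintype α]

theorem expUtil_fin_two (u : ∀ _ : Fin 2, (Fin 2 → α) → ℝ) (σ : ∀ _ : Fin 2, α → ℝ)
    (i : Fin 2) : expUtil u σ i = ∑ a, ∑ b, u i ![a, b] * (σ 0 a * σ 1 b) := by
  rw [expUtil, ← (piFinTwoEquiv fun _ => α).symm.sum_comp, Fintype.sum_prod_type]
  simp only [piFinTwoEquiv_symm_apply, Fin.prod_univ_two, Fin.cons_zero, Fin.cons_one]
  rfl

variable [DecidableEq α]

theorem devUtil_fin_two_zero (u : ∀ _ : Fin 2, (Fin 2 → α) → ℝ) (σ : ∀ _ : Fin 2, α → ℝ)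
    (a : α) : devUtil u σ 0 a = ∑ b, u 0 ![a, b] * σ 1 b := by
  simp [devUtil, expUtil_fin_two]

theorem devUtil_fin_two_one (u : ∀ _ : Fin 2, (Fin 2 → α) → ℝ) (σ : ∀ _ : Fin 2, α → ℝ)
    (b : α) : devUtil u σ 1 b = ∑ a, u 1 ![a, b] * σ 0 a := by
  simp [devUtil, expUtil_fin_two]

end TwoPlayer

section Psi

variable (σ : ∀ _ : Fin 2, Fin 2 → ℝ)

theorem devUtil_uPsi_zero_zero : devUtil uPsi σ 0 0 = 2 * σ 1 0 + 2 * σ 1 1 := by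
  simp [devUtil_fin_two_zero, Fin.sum_univ_two, uPsi]

theorem devUtil_uPsi_zero_one : devUtil uPsi σ 0 1 = 2 * σ 1 0 := by
  simp [devUtil_fin_two_zero, Fin.sum_univ_two, uPsi]

theorem devUtil_uPsi_one_zero : devUtil uPsi σ 1 0 = 2 * σ 0 0 + 3 * σ 0 1 := by
  simp [devUtil_fin_two_one, Fin.sum_univ_two, uPsi]

theorem devUtil_uPsi_one_one : devUtil uPsi σ 1 1 = σ 0 0 := by
  simp [devUtil_fin_two_one, Fin.sum_univ_two, uPsi]

variable {σ}

theorem devUtil_uPsi_one_one_lt (hσ : IsStrategy σ) : devUtil uPsi σ 1 1 < devUtil uPsi σ 1 0 := by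
  rw [devUtil_uPsi_one_one, devUtil_uPsi_one_zero]
  linarith [hσ.apply_zero_add_apply_one 0, hσ.1 0 1]

theorem isNash_uPsi_iff (hσ : IsStrategy σ) : IsNash uPsi σ ↔ σ 1 0 = 1 := by
  have h0 := hσ.apply_zero_add_apply_one 0
  have h1 := hσ.apply_zero_add_apply_one 1
  refine ⟨fun h => ?_, fun hb1 => ?_⟩
  · linarith [h.apply_eq_zero_of_devUtil_lt (devUtil_uPsi_one_one_lt hσ)]
  · have hb2 : σ 1 1 = 0 := by linarith
    simp only [isNash_iff_devUtil_le, expUtil_eq_sum_devUtil, Fin.forall_fin_two,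
      Fin.sum_univ_two, devUtil_uPsi_zero_zero, devUtil_uPsi_zero_one, devUtil_uPsi_one_zero,
      devUtil_uPsi_one_one, hb1, hb2]
    refine ⟨hσ, ⟨?_, ?_⟩, ?_, ?_⟩ <;> linarith [hσ.1 0 0, hσ.1 0 1]

theorem WeaklyPayoffMonotone.uPsi_zero_one_le (h : WeaklyPayoffMonotone uPsi σ) :
    σ 0 1 ≤ σ 0 0 :=
  h.le_of_devUtil_le <| by
    rw [devUtil_uPsi_zero_zero, devUtil_uPsi_zero_one]
    linarith [h.1.1 1 1]

theorem IsEmpirical.uPsi_half_le (h : IsEmpirical uPsi σ) : 1 / 2 ≤ σ 0 0 := by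
  obtain ⟨hN, s, hs, hlim⟩ := h
  have : σ 0 1 ≤ σ 0 0 :=
    le_of_tendsto_of_tendsto' (hlim 0 1) (hlim 0 0) fun n => (hs n).uPsi_zero_one_le
  linarith [hN.1.apply_zero_add_apply_one 0]

def psiPerturb (σ : ∀ _ : Fin 2, Fin 2 → ℝ) (ε : ℝ) : ∀ _ : Fin 2, Fin 2 → ℝ :=
  ![σ 0, ![1 - ε, ε]]

theorem weaklyPayoffMonotone_psiPerturb (hσ : IsStrategy σ) (h : σ 0 1 ≤ σ 0 0) {ε : ℝ}
    (hε : 0 < ε) (hε' : ε ≤ 1 / 2) : WeaklyPayoffMonotone uPsi (psiPerturb σ ε) := by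
  have hσ0 := hσ.apply_zero_add_apply_one 0
  refine ⟨⟨?_, ?_⟩, ?_⟩
  · simp only [psiPerturb, Fin.forall_fin_two, Matrix.cons_val_zero, Matrix.cons_val_one]
    exact ⟨⟨hσ.1 0 0, hσ.1 0 1⟩, by linarith, hε.le⟩
  · simpa [Fin.sum_univ_two, psiPerturb] using hσ0
  · simp only [Fin.forall_fin_two, lt_irrefl, IsEmpty.forall_iff, true_and, and_true,
      devUtil_uPsi_zero_zero, devUtil_uPsi_zero_one, devUtil_uPsi_one_zero, devUtil_uPsi_one_one,
      psiPerturb, Matrix.cons_val_zero, Matrix.cons_val_one]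
    exact ⟨⟨fun _ => by linarith, fun hlt => absurd hlt h.not_gt⟩,
      fun _ => by linarith [hσ.1 0 0, hσ.1 0 1], fun _ => by linarith⟩

theorem convergesTo_psiPerturb (hσ : IsStrategy σ) (h : σ 1 0 = 1) {ε : ℕ → ℝ}
    (hε : Tendsto ε atTop (𝓝 0)) : ConvergesTo (fun n => psiPerturb σ (ε n)) σ := by
  have hb2 : σ 1 1 = 0 := by linarith [hσ.apply_zero_add_apply_one 1]
  simp only [ConvergesTo, Fin.forall_fin_two, psiPerturb, Matrix.cons_val_zero,
    Matrix.cons_val_one, h, hb2]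
  exact ⟨⟨tendsto_const_nhds, tendsto_const_nhds⟩, by simpa using tendsto_const_nhds.sub hε, hε⟩

theorem isEmpirical_uPsi (hσ : IsStrategy σ) (h1 : σ 1 0 = 1) (h0 : 1 / 2 ≤ σ 0 0) :
    IsEmpirical uPsi σ := by
  have hε : Tendsto (fun n : ℕ => 1 / ((n : ℝ) + 2)) atTop (𝓝 0) := by
    have := (tendsto_one_div_add_atTop_nhds_zero_nat (𝕜 := ℝ)).comp (tendsto_add_atTop_nat 1)
    refine this.congr fun n => ?_
    push_cast [Function.comp_apply]
    ring
  refine ⟨(isNash_uPsi_iff hσ).2 h1, fun n => psiPerturb σ (1 / (n + 2)), fun n => ?_,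
    convergesTo_psiPerturb hσ h1 hε⟩
  have hn : (2 : ℝ) ≤ n + 2 := le_add_of_nonneg_left n.cast_nonneg
  exact weaklyPayoffMonotone_psiPerturb hσ (by linarith [hσ.apply_zero_add_apply_one 0])
    (by positivity) (one_div_le_one_div_of_le two_pos hn)

end Psi

/-- in Ψ, the Nash equilibria are exactly the profiles in which player 2
plays b1 with certainty, and the empirical equilibria are exactly the Nash equilibria
in which player 1 plays a1 with probability at least 1/2. -/
theorem psi_nash_and_empirical (σ : ∀ _ : Fin 2, Fin 2 → ℝ) (hσ : IsStrategy σ) :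
    (IsNash uPsi σ ↔ σ 1 0 = 1) ∧
    (IsEmpirical uPsi σ ↔ (σ 1 0 = 1 ∧ 1 / 2 ≤ σ 0 0)) :=
  ⟨isNash_uPsi_iff hσ, fun h => ⟨(isNash_uPsi_iff hσ).1 h.1, h.uPsi_half_le⟩,
    fun h => isEmpirical_uPsi hσ h.1 h.2⟩
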